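/- arXiv:1403.5891 — 3 statements merged into one kernel-verified Lean document; each statement's English description precedes it below -/
import Mathlib

section
/- Let A be a complex *-algebra, let v, w be representable positive functionals on A, and let (H_v, π_v, ζ_v) be a cyclic representation of v. Assume that there exists C ≥ 0 with w(a*a) ≤ C v(a*a) for all a ∈ A, and that π_v is irreducible, i.e. every bounded operator T ∈ B(H_v) satisfying T π_v(a) = π_v(a) T for all a ∈ A is a complex scalar multiple of the identity. Then there exists α ≥ 0 such that w(a) = α v(a) for all a ∈ A. -/
/-! The domination `w (a⋆a) ≤ C v (a⋆a)` reads `‖πw a ζw‖ ≤ √C ‖πv a ζv‖`, so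
`πv a ζv ↦ πw a ζw` extends from the dense orbit of `ζv` to a bounded operator `V : Hv → Hw`
intertwining `πv` and `πw`. Then `V† V` commutes with `πv`, so irreducibility gives
`V† V = c • 1`, and `w a = ⟪V ζv, V (πv a ζv)⟫ = c v a` with `c = ‖V ζv‖² / ‖ζv‖² ≥ 0`. -/

open scoped InnerProductSpace in
theorem eq_sq_norm_div_of_inner_map_map {𝕜 H K : Type*} [RCLike 𝕜]
    [NormedAddCommGroup H] [InnerProductSpace 𝕜 H] [NormedAddCommGroup K]
    [InnerProductSpace 𝕜 K] {V : H → K} {c : 𝕜} (hV : ∀ ξ, ⟪V ξ, V ξ⟫_𝕜 = c * ⟪ξ, ξ⟫_𝕜)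
    {ξ : H} (hξ : ξ ≠ 0) : c = (((‖V ξ‖ / ‖ξ‖) ^ 2 : ℝ) : 𝕜) := by
  have h := hV ξ
  rw [inner_self_eq_norm_sq_to_K, inner_self_eq_norm_sq_to_K] at h
  have hξ' : (‖ξ‖ : 𝕜) ≠ 0 := by exact_mod_cast norm_ne_zero_iff.2 hξ
  push_cast
  rw [div_pow, h, mul_div_assoc, div_self (pow_ne_zero 2 hξ'), mul_one]

section Representation

open scoped InnerProductSpace InnerProduct

variable {𝕜 A H K : Type*} [RCLike 𝕜] [NonUnitalRing A] [Module 𝕜 A] [StarRing A]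
  [NormedAddCommGroup H] [InnerProductSpace 𝕜 H] [CompleteSpace H]
  [NormedAddCommGroup K] [InnerProductSpace 𝕜 K] [CompleteSpace K]

noncomputable def orbitMap (π : A →⋆ₙₐ[𝕜] (H →L[𝕜] H)) (ζ : H) : A →ₗ[𝕜] H where
  toFun a := π a ζ
  map_add' a b := by simp
  map_smul' c a := by simp

theorem adjoint_representation_apply (π : A →⋆ₙₐ[𝕜] (H →L[𝕜] H)) (a : A) :
    (π a)† = π (star a) := by
  rw [← ContinuousLinearMap.star_eq_adjoint, map_star]

theorem norm_representation_apply_sq (π : A →⋆ₙₐ[𝕜] (H →L[𝕜] H)) (ζ : H) (a : A) :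
    ‖π a ζ‖ ^ 2 = RCLike.re ⟪ζ, π (star a * a) ζ⟫_𝕜 := by
  rw [map_mul, mul_apply_eq_comp, ← adjoint_representation_apply,
    ContinuousLinearMap.adjoint_inner_right, inner_self_eq_norm_sq]

theorem inner_representation_apply_eq_of_forall_apply_eq (π : A →⋆ₙₐ[𝕜] (H →L[𝕜] H))
    {ξ η : H} (h : ∀ b, π b ξ = π b η) (a : A) :
    ⟪ξ, π a ξ⟫_𝕜 = ⟪η, π a η⟫_𝕜 := by
  rw [h, ← ContinuousLinearMap.adjoint_inner_left, adjoint_representation_apply, h,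
    ← ContinuousLinearMap.adjoint_inner_right, adjoint_representation_apply, star_star]

def IsIntertwiner (π : A →⋆ₙₐ[𝕜] (H →L[𝕜] H)) (ρ : A →⋆ₙₐ[𝕜] (K →L[𝕜] K))
    (V : H →L[𝕜] K) : Prop :=
  ∀ (a : A) (ξ : H), V (π a ξ) = ρ a (V ξ)

namespace IsIntertwiner

variable {π : A →⋆ₙₐ[𝕜] (H →L[𝕜] H)} {ρ : A →⋆ₙₐ[𝕜] (K →L[𝕜] K)} {V : H →L[𝕜] K}

theorem of_apply_orbit {ζ : H} {η : K} (hζ : DenseRange (π · ζ))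
    (hV : ∀ a, V (π a ζ) = ρ a η) : IsIntertwiner π ρ V := by
  intro a
  refine congrFun (hζ.equalizer (V.continuous.comp (π a).continuous)
    ((ρ a).continuous.comp V.continuous) (funext fun b => ?_))
  simp only [Function.comp_apply, ← mul_apply_eq_comp, ← map_mul, hV]

theorem adjoint (hV : IsIntertwiner π ρ V) : IsIntertwiner ρ π (V†) := by
  intro a ξ
  refine ext_inner_left 𝕜 fun ν => ?_
  rw [ContinuousLinearMap.adjoint_inner_right, ← ContinuousLinearMap.adjoint_inner_left,
    adjoint_representation_apply, ← hV, ← ContinuousLinearMap.adjoint_inner_right V,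
    ← adjoint_representation_apply, ContinuousLinearMap.adjoint_inner_left]

theorem comp {L : Type*} [NormedAddCommGroup L] [InnerProductSpace 𝕜 L] [CompleteSpace L]
    {σ : A →⋆ₙₐ[𝕜] (L →L[𝕜] L)} {W : K →L[𝕜] L} (hW : IsIntertwiner ρ σ W)
    (hV : IsIntertwiner π ρ V) : IsIntertwiner π σ (W ∘L V) := by
  intro a ξ
  simp only [ContinuousLinearMap.comp_apply, hV a, hW a]

end IsIntertwiner

theorem exists_isIntertwiner_of_norm_le {π : A →⋆ₙₐ[𝕜] (H →L[𝕜] H)}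
    {ρ : A →⋆ₙₐ[𝕜] (K →L[𝕜] K)} {ζ : H} {η : K} (hζ : DenseRange (π · ζ)) {C : ℝ}
    (hC : ∀ a, ‖ρ a η‖ ≤ C * ‖π a ζ‖) :
    ∃ V : H →L[𝕜] K, IsIntertwiner π ρ V ∧ ∀ a, V (π a ζ) = ρ a η := by
  have hV : ∀ a, (orbitMap ρ η).extendOfNorm (orbitMap π ζ) (π a ζ) = ρ a η :=
    LinearMap.extendOfNorm_eq hζ ⟨C, hC⟩
  exact ⟨_, .of_apply_orbit hζ hV, hV⟩

theorem inner_map_map_of_adjoint_comp_self_eq_smul {V : H →L[𝕜] K} {c : 𝕜}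
    (hV : V† ∘L V = c • 1) (ξ η : H) :
    ⟪V ξ, V η⟫_𝕜 = c * ⟪ξ, η⟫_𝕜 := by
  rw [← ContinuousLinearMap.adjoint_inner_right, ← ContinuousLinearMap.comp_apply, hV,
    smul_apply, one_apply_eq_self, inner_smul_right]

end Representation

open scoped ComplexInnerProductSpace ComplexOrder

theorem proportional_of_dominated_of_irreducible_general
    {A : Type*} [NonUnitalRing A] [Module ℂ A] [StarRing A]
    (v w : A →ₗ[ℂ] ℂ)
    {Hv : Type*} [NormedAddCommGroup Hv] [InnerProductSpace ℂ Hv] [CompleteSpace Hv]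
    (πv : A →⋆ₙₐ[ℂ] (Hv →L[ℂ] Hv)) (ζv : Hv)
    (hv_cyc : DenseRange fun a : A => πv a ζv)
    (hv_rep : ∀ a : A, v a = ⟪ζv, πv a ζv⟫)
    {Hw : Type*} [NormedAddCommGroup Hw] [InnerProductSpace ℂ Hw] [CompleteSpace Hw]
    (πw : A →⋆ₙₐ[ℂ] (Hw →L[ℂ] Hw)) (ζw : Hw)
    (hw_rep : ∀ a : A, w a = ⟪ζw, πw a ζw⟫)
    (hdom : ∃ C : ℝ, 0 ≤ C ∧ ∀ a : A, (w (star a * a)).re ≤ C * (v (star a * a)).re)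
    (hirr : ∀ S : Hv →L[ℂ] Hv,
      (∀ (a : A) (ξ : Hv), S (πv a ξ) = πv a (S ξ)) →
      ∃ c : ℂ, S = c • (1 : Hv →L[ℂ] Hv)) :
    ∃ α : ℝ, 0 ≤ α ∧ ∀ a : A, w a = (α : ℂ) * v a := by
  obtain ⟨C, hC, hCle⟩ := hdom
  have hbound : ∀ a, ‖πw a ζw‖ ≤ Real.sqrt C * ‖πv a ζv‖ := fun a => by
    have h : ‖πw a ζw‖ ^ 2 ≤ C * ‖πv a ζv‖ ^ 2 := by
      rw [norm_representation_apply_sq, norm_representation_apply_sq, ← hv_rep, ← hw_rep]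
      exact hCle a
    replace h := Real.sqrt_le_sqrt h
    rwa [Real.sqrt_sq (norm_nonneg _), Real.sqrt_mul hC, Real.sqrt_sq (norm_nonneg _)] at h
  obtain ⟨V, hV, hVζ⟩ := exists_isIntertwiner_of_norm_le hv_cyc hbound
  obtain ⟨c, hc⟩ := hirr _ (hV.adjoint.comp hV)
  have hVV := inner_map_map_of_adjoint_comp_self_eq_smul hc
  -- `ζw` and `V ζv` may differ, but only by a vector killed by every `πw b`.
  have hwc : ∀ a, w a = c * v a := fun a => by
    rw [hw_rep, inner_representation_apply_eq_of_forall_apply_eq πw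
      (fun b => (hVζ b).symm.trans (hV b ζv)), ← hV, hVV, hv_rep]
  rcases eq_or_ne ζv 0 with rfl | hζ
  · exact ⟨0, le_rfl, fun a => by simp [hwc, hv_rep]⟩
  · refine ⟨(‖V ζv‖ / ‖ζv‖) ^ 2, by positivity, fun a => ?_⟩
    rw [hwc, eq_sq_norm_div_of_inner_map_map (fun ξ => hVV ξ ξ) hζ]
    rfl

/-- **Corollary.** Let `v, w` be representable positive functionals on a complex
`*`-algebra `A` with `w ≤ C v` for some `C ≥ 0`, and let `(Hv, πv, ζv)` be a cyclic
representation of `v` with `πv` irreducible (every bounded operator commuting with the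
range of `πv` is a scalar multiple of the identity).  Then `w = α v` for some `α ≥ 0`. -/
theorem proportional_of_dominated_of_irreducible
    {A : Type*} [NonUnitalRing A] [Module ℂ A] [SMulCommClass ℂ A A]
    [IsScalarTower ℂ A A] [StarRing A] [StarModule ℂ A]
    (v w : A →ₗ[ℂ] ℂ)
    (hv : ∀ a : A, 0 ≤ v (star a * a)) (hw : ∀ a : A, 0 ≤ w (star a * a))
    {Hv : Type*} [NormedAddCommGroup Hv] [InnerProductSpace ℂ Hv] [CompleteSpace Hv]
    (πv : A →⋆ₙₐ[ℂ] (Hv →L[ℂ] Hv)) (ζv : Hv)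
    (hv_cyc : DenseRange fun a : A => πv a ζv)
    (hv_rep : ∀ a : A, v a = ⟪ζv, πv a ζv⟫)
    {Hw : Type*} [NormedAddCommGroup Hw] [InnerProductSpace ℂ Hw] [CompleteSpace Hw]
    (πw : A →⋆ₙₐ[ℂ] (Hw →L[ℂ] Hw)) (ζw : Hw)
    (hw_cyc : DenseRange fun a : A => πw a ζw)
    (hw_rep : ∀ a : A, w a = ⟪ζw, πw a ζw⟫)
    (hdom : ∃ C : ℝ, 0 ≤ C ∧ ∀ a : A, (w (star a * a)).re ≤ C * (v (star a * a)).re)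
    (hirr : ∀ S : Hv →L[ℂ] Hv,
      (∀ (a : A) (ξ : Hv), S (πv a ξ) = πv a (S ξ)) →
      ∃ c : ℂ, S = c • (1 : Hv →L[ℂ] Hv)) :
    ∃ α : ℝ, 0 ≤ α ∧ ∀ a : A, w a = (α : ℂ) * v a :=
  proportional_of_dominated_of_irreducible_general v w πv ζv hv_cyc hv_rep πw ζw hw_rep hdom hirr
end

section
/- Let A be a C*-algebra and let v, w be positive linear functionals on A, each admitting a cyclic representation. Assume that v is pure, i.e. v admits a cyclic representation (H_v, π_v, ζ_v) in which π_v is irreducible (every bounded operator T ∈ B(H_v) with T π_v(a) = π_v(a) T for all a ∈ A is a complex scalar multiple of the identity). Then w is absolutely continuous with respect to v if and only if there exists α ≥ 0 such that w(a) = α v(a) for all a ∈ A. -/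
/-!
Let `G` be the closure of `{(πv a ζv, πw a ζw)}` in `Hv ⊕ Hw`. Absolute continuity of `w` with
respect to `v` says precisely that `G` is the graph of a (closed, possibly unbounded) operator.
The orthogonal projection `P` onto `G` commutes with `πv ⊕ πw`, so its corner `Hv → Hv` is a
scalar `c` by irreducibility, and its corner `Q : Hv → Hw` intertwines `πv` and `πw` with
`Q (πv a ζv) = c • πw a ζw`. When `c ≠ 0`, `S = c⁻¹ Q` is a bounded intertwiner sending `πv a ζv`
to `πw a ζw`; when `c = 0` both vectors vanish and `S = 0` does. Irreducibility makes `S⋆S` a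
scalar `γ`, whence `w (a⋆a) = γ v (a⋆a)`, and a functional vanishing on all `a⋆a` is zero because
a C⋆-algebra is spanned by its positive elements.
-/

open Filter Topology
open scoped ComplexInnerProductSpace ComplexOrder

/-- `w` is absolutely continuous with respect to `v`. -/
def FunctionalAC {A : Type*} [NonUnitalRing A] [StarRing A] (w v : A → ℂ) : Prop :=
  ∀ a : ℕ → A,
    Tendsto (fun n => v (star (a n) * a n)) atTop (𝓝 0) →
    Tendsto (fun p : ℕ × ℕ => w (star (a p.1 - a p.2) * (a p.1 - a p.2))) atTop (𝓝 0) →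
    Tendsto (fun n => w (star (a n) * a n)) atTop (𝓝 0)

lemma LinearMap.eq_zero_of_map_star_mul_self_eq_zero {A : Type*} [NonUnitalCStarAlgebra A]
    (φ : A →ₗ[ℂ] ℂ) (h : ∀ b : A, φ (star b * b) = 0) : φ = 0 := by
  let _ := CStarAlgebra.spectralOrder A
  let _ := CStarAlgebra.spectralOrderedRing A
  refine LinearMap.ext_on CStarAlgebra.span_nonneg fun a ha => ?_
  obtain ⟨b, rfl⟩ := CStarAlgebra.nonneg_iff_eq_star_mul_self.mp (show 0 ≤ a from ha)
  simp [h]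

lemma Complex.exists_real_nonneg_of_forall_eq_mul {X : Type*} {f g : X → ℂ} {γ : ℂ}
    (hf : ∀ x, 0 ≤ f x) (hg : ∀ x, 0 ≤ g x) (h : ∀ x, g x = γ * f x) :
    ∃ α : ℝ, 0 ≤ α ∧ ∀ x, g x = α * f x := by
  by_cases hf0 : ∀ x, f x = 0
  · exact ⟨0, le_rfl, fun x => by simp [h, hf0]⟩
  obtain ⟨x₀, hx₀⟩ := not_forall.mp hf0
  have hγ : 0 ≤ γ := by
    rw [← mul_div_cancel_right₀ γ hx₀, ← h]
    exact div_nonneg (hg x₀) (hf x₀)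
  obtain ⟨α, hα, rfl⟩ := RCLike.nonneg_iff_exists_ofReal.mp hγ
  exact ⟨α, hα, h⟩

section Representation

variable {A H : Type*} [NonUnitalSemiring A] [StarRing A] [Module ℂ A]
  [NormedAddCommGroup H] [InnerProductSpace ℂ H] [CompleteSpace H]

lemma NonUnitalStarAlgHom.inner_map_star_left (π : A →⋆ₙₐ[ℂ] (H →L[ℂ] H)) (a : A) (x y : H) :
    ⟪π (star a) x, y⟫ = ⟪x, π a y⟫ := by
  rw [map_star, ContinuousLinearMap.star_eq_adjoint, ContinuousLinearMap.adjoint_inner_left]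

lemma NonUnitalStarAlgHom.inner_map_star_mul_self (π : A →⋆ₙₐ[ℂ] (H →L[ℂ] H)) (ζ : H) (a : A) :
    ⟪ζ, π (star a * a) ζ⟫ = ⟪π a ζ, π a ζ⟫ := by
  rw [map_mul, mul_apply_eq_comp, ← π.inner_map_star_left, star_star]

def NonUnitalStarAlgHom.IsIrreducible (π : A →⋆ₙₐ[ℂ] (H →L[ℂ] H)) : Prop :=
  ∀ S : H →L[ℂ] H, (∀ (a : A) (ξ : H), S (π a ξ) = π a (S ξ)) → ∃ c : ℂ, S = c • 1

end Representation

section DirectSum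

variable {A E F : Type*} [NonUnitalSemiring A] [StarRing A] [Module ℂ A]
  [NormedAddCommGroup E] [InnerProductSpace ℂ E] [CompleteSpace E]
  [NormedAddCommGroup F] [InnerProductSpace ℂ F] [CompleteSpace F]

noncomputable def NonUnitalStarAlgHom.prodL2 (π₁ : A →⋆ₙₐ[ℂ] (E →L[ℂ] E))
    (π₂ : A →⋆ₙₐ[ℂ] (F →L[ℂ] F)) :
    A →⋆ₙₐ[ℂ] (WithLp 2 (E × F) →L[ℂ] WithLp 2 (E × F)) where
  toFun a := (WithLp.prodContinuousLinearEquiv 2 ℂ E F).symm.toContinuousLinearMap ∘L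
    ((π₁ a).prodMap (π₂ a)) ∘L (WithLp.prodContinuousLinearEquiv 2 ℂ E F).toContinuousLinearMap
  map_smul' c a := by ext x : 1; apply WithLp.ofLp_injective; ext <;> simp
  map_zero' := by ext x : 1; apply WithLp.ofLp_injective; ext <;> simp
  map_add' a b := by ext x : 1; apply WithLp.ofLp_injective; ext <;> simp
  map_mul' a b := by ext x : 1; apply WithLp.ofLp_injective; ext <;> simp
  map_star' a := by
    refine ((ContinuousLinearMap.eq_adjoint_iff _ _).mpr fun x y => ?_).trans
      (ContinuousLinearMap.star_eq_adjoint _).symm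
    simp [NonUnitalStarAlgHom.inner_map_star_left]

variable (π₁ : A →⋆ₙₐ[ℂ] (E →L[ℂ] E)) (π₂ : A →⋆ₙₐ[ℂ] (F →L[ℂ] F))

@[simp]
lemma NonUnitalStarAlgHom.prodL2_apply (a : A) (x : WithLp 2 (E × F)) :
    π₁.prodL2 π₂ a x = WithLp.toLp 2 (π₁ a x.fst, π₂ a x.snd) := rfl

end DirectSum

section Cyclic

variable {A H : Type*} [NonUnitalSemiring A] [StarRing A] [Module ℂ A]
  [NormedAddCommGroup H] [InnerProductSpace ℂ H] [CompleteSpace H]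
  (π : A →⋆ₙₐ[ℂ] (H →L[ℂ] H))

noncomputable def NonUnitalStarAlgHom.cyclicSubspace (ζ : H) : Submodule ℂ H :=
  (LinearMap.range ((ContinuousLinearMap.apply ℂ H ζ).toLinearMap ∘ₗ
    (π : A →ₗ[ℂ] (H →L[ℂ] H)))).topologicalClosure

lemma NonUnitalStarAlgHom.coe_cyclicSubspace (ζ : H) :
    (π.cyclicSubspace ζ : Set H) = closure (Set.range fun a => π a ζ) := rfl

instance (ζ : H) : CompleteSpace (π.cyclicSubspace ζ) :=
  (Submodule.isClosed_topologicalClosure _).completeSpace_coe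

lemma NonUnitalStarAlgHom.apply_mem_cyclicSubspace (a : A) (ζ : H) :
    π a ζ ∈ π.cyclicSubspace ζ :=
  Submodule.le_topologicalClosure _ (LinearMap.mem_range_self _ a)

lemma NonUnitalStarAlgHom.cyclicSubspace_mem_invtSubmodule (ζ : H) (b : A) :
    π.cyclicSubspace ζ ∈ Module.End.invtSubmodule (π b : H →ₗ[ℂ] H) := by
  rw [Module.End.mem_invtSubmodule_iff_forall_mem_of_mem]
  intro x hx
  rw [← SetLike.mem_coe, coe_cyclicSubspace] at hx ⊢
  refine map_mem_closure (π b).continuous hx ?_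
  rintro _ ⟨a, rfl⟩
  exact ⟨b * a, by simp [mul_apply_eq_comp]⟩

lemma NonUnitalStarAlgHom.commute_starProjection (U : Submodule ℂ H) [U.HasOrthogonalProjection]
    (hU : ∀ b, U ∈ Module.End.invtSubmodule (π b : H →ₗ[ℂ] H)) (b : A) :
    Commute U.starProjection (π b) := by
  rw [ContinuousLinearMap.IsIdempotentElem.commute_iff U.isIdempotentElem_starProjection,
    Submodule.range_starProjection, Submodule.ker_starProjection]
  refine ⟨hU b, ContinuousLinearMap.orthogonal_mem_invtSubmodule ?_⟩
  rw [← ContinuousLinearMap.star_eq_adjoint, ← map_star]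
  exact hU (star b)

end Cyclic

lemma WithLp.snd_eq_zero_of_mem_closure_range {X E F : Type*} [NormedAddCommGroup E]
    [NormedAddCommGroup F] {p : ENNReal} [Fact (1 ≤ p)] (f : X → E) (g : X → F)
    (hfg : ∀ x : ℕ → X, Tendsto (f ∘ x) atTop (𝓝 0) → CauchySeq (g ∘ x) →
      Tendsto (g ∘ x) atTop (𝓝 0))
    {z : WithLp p (E × F)} (hz : z ∈ closure (Set.range fun x => WithLp.toLp p (f x, g x)))
    (hz₁ : z.fst = 0) : z.snd = 0 := by
  obtain ⟨u, hu, hlim⟩ := mem_closure_iff_seq_limit.mp hz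
  choose x hx using hu
  have hf : Tendsto (f ∘ x) atTop (𝓝 z.fst) := by
    have := ((continuous_fst.comp (WithLp.prod_continuous_ofLp p E F)).tendsto z).comp hlim
    simpa [Function.comp_def, ← hx] using this
  have hg : Tendsto (g ∘ x) atTop (𝓝 z.snd) := by
    have := ((continuous_snd.comp (WithLp.prod_continuous_ofLp p E F)).tendsto z).comp hlim
    simpa [Function.comp_def, ← hx] using this
  rw [hz₁] at hf
  exact tendsto_nhds_unique hg (hfg x hf hg.cauchySeq)

lemma tendsto_inner_self_nhds_zero_iff {ι H : Type*} [NormedAddCommGroup H]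
    [InnerProductSpace ℂ H] {l : Filter ι} {x : ι → H} :
    Tendsto (fun i => ⟪x i, x i⟫) l (𝓝 0) ↔ Tendsto x l (𝓝 0) := by
  rw [tendsto_zero_iff_norm_tendsto_zero, tendsto_zero_iff_norm_tendsto_zero (f := x)]
  simp only [inner_self_eq_norm_sq_to_K, norm_pow]
  constructor
  · intro h
    simpa [Function.comp_def] using (Real.continuous_sqrt.tendsto 0).comp h
  · intro h
    simpa using h.pow 2

lemma tendsto_zero_of_functionalAC {A E F : Type*} [NonUnitalRing A] [StarRing A] [Module ℂ A]
    [NormedAddCommGroup E] [InnerProductSpace ℂ E] [CompleteSpace E]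
    [NormedAddCommGroup F] [InnerProductSpace ℂ F] [CompleteSpace F]
    {πv : A →⋆ₙₐ[ℂ] (E →L[ℂ] E)} {ζv : E} {πw : A →⋆ₙₐ[ℂ] (F →L[ℂ] F)} {ζw : F}
    (h : FunctionalAC (fun a => ⟪ζw, πw a ζw⟫) (fun a => ⟪ζv, πv a ζv⟫)) (a : ℕ → A)
    (hv : Tendsto (fun n => πv (a n) ζv) atTop (𝓝 0)) (hw : CauchySeq fun n => πw (a n) ζw) :
    Tendsto (fun n => πw (a n) ζw) atTop (𝓝 0) := by
  simp only [FunctionalAC, NonUnitalStarAlgHom.inner_map_star_mul_self, map_sub,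
    sub_apply, tendsto_inner_self_nhds_zero_iff] at h
  refine h a hv ?_
  rw [cauchySeq_iff_tendsto_dist_atTop_0] at hw
  simpa [tendsto_zero_iff_norm_tendsto_zero, dist_eq_norm] using hw

section Intertwiner

variable {A E F : Type*} [NonUnitalSemiring A] [StarRing A] [Module ℂ A]
  [NormedAddCommGroup E] [InnerProductSpace ℂ E] [CompleteSpace E]
  [NormedAddCommGroup F] [InnerProductSpace ℂ F] [CompleteSpace F]
  {πv : A →⋆ₙₐ[ℂ] (E →L[ℂ] E)} {πw : A →⋆ₙₐ[ℂ] (F →L[ℂ] F)}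

theorem exists_intertwiner_of_forall_snd_eq_zero
    (hirr : πv.IsIrreducible) {ζv : E} {ζw : F}
    (hgraph : ∀ z ∈ (πv.prodL2 πw).cyclicSubspace (WithLp.toLp 2 (ζv, ζw)),
      z.fst = 0 → z.snd = 0) :
    ∃ S : E →L[ℂ] F, (∀ (b : A) (ξ : E), S (πv b ξ) = πw b (S ξ)) ∧
      ∀ a : A, S (πv a ζv) = πw a ζw := by
  set G := (πv.prodL2 πw).cyclicSubspace (WithLp.toLp 2 (ζv, ζw))
  set P := G.starProjection
  have hPcomm : ∀ b, Commute P (πv.prodL2 πw b) :=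
    (πv.prodL2 πw).commute_starProjection G ((πv.prodL2 πw).cyclicSubspace_mem_invtSubmodule _)
  let inl : E →L[ℂ] WithLp 2 (E × F) :=
    (WithLp.prodContinuousLinearEquiv 2 ℂ E F).symm.toContinuousLinearMap ∘L
      ContinuousLinearMap.inl ℂ E F
  have hPinl_map : ∀ b ξ, P (inl (πv b ξ)) = πv.prodL2 πw b (P (inl ξ)) := fun b ξ => by
    have : πv.prodL2 πw b (inl ξ) = inl (πv b ξ) := by simp [inl]
    rw [← this]
    exact congr($(hPcomm b) (inl ξ))
  obtain ⟨c, hc⟩ := hirr (WithLp.fstL 2 ℂ E F ∘L P ∘L inl) (fun b ξ => by simp [hPinl_map])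
  let Q := WithLp.sndL 2 ℂ E F ∘L P ∘L inl
  have hQ : ∀ b ξ, Q (πv b ξ) = πw b (Q ξ) := by simp [Q, hPinl_map]
  have hPinl : ∀ ξ, P (inl ξ) = WithLp.toLp 2 (c • ξ, Q ξ) := fun ξ => by
    refine WithLp.ofLp_injective 2 (Prod.ext ?_ rfl)
    simpa using congr($hc ξ)
  have hmem : ∀ a, πv.prodL2 πw a (WithLp.toLp 2 (ζv, ζw)) ∈ G := fun a =>
    (πv.prodL2 πw).apply_mem_cyclicSubspace a _
  have hQζ : ∀ a, Q (πv a ζv) = c • πw a ζw := fun a => by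
    have hsub : P (inl (πv a ζv)) - c • πv.prodL2 πw a (WithLp.toLp 2 (ζv, ζw)) ∈ G :=
      G.sub_mem (G.starProjection_apply_mem _) (G.smul_mem c (hmem a))
    simpa [hPinl, sub_eq_zero] using hgraph _ hsub (by simp [hPinl])
  rcases eq_or_ne c 0 with rfl | hc0
  · refine ⟨0, by simp, fun a => ?_⟩
    -- now `P (ξ, 0) = (0, Q ξ)`, so `(πv a ζv, 0)` is orthogonal to `(πv a ζv, πw a ζw) ∈ G`
    have hv0 : πv a ζv = 0 := by
      have := G.inner_starProjection_left_eq_right (πv.prodL2 πw a (WithLp.toLp 2 (ζv, ζw)))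
        (inl (πv a ζv))
      rw [G.starProjection_eq_self_iff.mpr (hmem a), hPinl, hQζ] at this
      simpa [inl] using this
    simpa [hv0] using (hgraph _ (hmem a) (by simp [hv0])).symm
  · exact ⟨c⁻¹ • Q, fun b ξ => by simp [hQ], fun a => by simp [hQζ, hc0]⟩

lemma exists_inner_map_self_eq_mul_of_intertwines
    (hirr : πv.IsIrreducible) {S : E →L[ℂ] F} (hS : ∀ (b : A) (ξ : E), S (πv b ξ) = πw b (S ξ)) :
    ∃ γ : ℂ, ∀ ξ : E, ⟪S ξ, S ξ⟫ = γ * ⟪ξ, ξ⟫ := by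
  have hS' : ∀ b η, S.adjoint (πw b η) = πv b (S.adjoint η) := fun b η =>
    ext_inner_right ℂ fun ξ => by
      rw [ContinuousLinearMap.adjoint_inner_left, ← star_star b, πw.inner_map_star_left, ← hS,
        ← ContinuousLinearMap.adjoint_inner_left, ← πv.inner_map_star_left]
  obtain ⟨γ, hγ⟩ := hirr (S.adjoint ∘L S) (by simp [hS, hS'])
  refine ⟨γ, fun ξ => ?_⟩
  rw [← ContinuousLinearMap.adjoint_inner_right, ← ContinuousLinearMap.comp_apply, hγ]
  simp [inner_smul_right]

end Intertwiner

theorem abs_continuous_iff_scalar_multiple_of_pure_general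
    {A : Type*} [NonUnitalNormedRing A] [StarRing A] [CStarRing A] [CompleteSpace A]
    [NormedSpace ℂ A] [SMulCommClass ℂ A A] [IsScalarTower ℂ A A] [StarModule ℂ A]
    (v w : A →ₗ[ℂ] ℂ)
    (hv : ∀ a : A, 0 ≤ v (star a * a)) (hw : ∀ a : A, 0 ≤ w (star a * a))
    {Hv : Type*} [NormedAddCommGroup Hv] [InnerProductSpace ℂ Hv] [CompleteSpace Hv]
    (πv : A →⋆ₙₐ[ℂ] (Hv →L[ℂ] Hv)) (ζv : Hv)
    (hv_rep : ∀ a : A, v a = ⟪ζv, πv a ζv⟫)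
    (hirr : ∀ S : Hv →L[ℂ] Hv,
      (∀ (a : A) (ξ : Hv), S (πv a ξ) = πv a (S ξ)) →
      ∃ c : ℂ, S = c • (1 : Hv →L[ℂ] Hv))
    {Hw : Type*} [NormedAddCommGroup Hw] [InnerProductSpace ℂ Hw] [CompleteSpace Hw]
    (πw : A →⋆ₙₐ[ℂ] (Hw →L[ℂ] Hw)) (ζw : Hw)
    (hw_rep : ∀ a : A, w a = ⟪ζw, πw a ζw⟫) :
    FunctionalAC w v ↔ ∃ α : ℝ, 0 ≤ α ∧ ∀ a : A, w a = (α : ℂ) * v a := by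
  constructor
  · intro hAC
    rw [show (w : A → ℂ) = _ from funext hw_rep, show (v : A → ℂ) = _ from funext hv_rep] at hAC
    obtain ⟨S, hS, hSζ⟩ := exists_intertwiner_of_forall_snd_eq_zero hirr fun z hz =>
      WithLp.snd_eq_zero_of_mem_closure_range _ _ (tendsto_zero_of_functionalAC hAC) hz
    obtain ⟨γ, hγ⟩ := exists_inner_map_self_eq_mul_of_intertwines hirr hS
    obtain ⟨α, hα, hwv⟩ := Complex.exists_real_nonneg_of_forall_eq_mul hv hw fun a => by
      rw [hv_rep, hw_rep, πv.inner_map_star_mul_self, πw.inner_map_star_mul_self, ← hSζ, hγ]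
    let _ : NonUnitalCStarAlgebra A := {}
    have := (w - (α : ℂ) • v).eq_zero_of_map_star_mul_self_eq_zero fun b => by simp [hwv]
    exact ⟨α, hα, fun a => by simpa [sub_eq_zero] using congr($this a)⟩
  · rintro ⟨α, -, hwv⟩ a hva -
    simpa [hwv] using hva.const_mul (α : ℂ)

/-- **Corollary.** Let `A` be a C*-algebra and let `v, w` be positive functionals on `A`
admitting cyclic representations.  If `v` is pure, i.e. it admits a cyclic representation
`(Hv, πv, ζv)` with `πv` irreducible, then `w` is absolutely continuous with respect to
`v` iff `w = α v` for some `α ≥ 0`. -/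
theorem abs_continuous_iff_scalar_multiple_of_pure
    {A : Type*} [NonUnitalNormedRing A] [StarRing A] [CStarRing A] [CompleteSpace A]
    [NormedSpace ℂ A] [SMulCommClass ℂ A A] [IsScalarTower ℂ A A] [StarModule ℂ A]
    (v w : A →ₗ[ℂ] ℂ)
    (hv : ∀ a : A, 0 ≤ v (star a * a)) (hw : ∀ a : A, 0 ≤ w (star a * a))
    {Hv : Type*} [NormedAddCommGroup Hv] [InnerProductSpace ℂ Hv] [CompleteSpace Hv]
    (πv : A →⋆ₙₐ[ℂ] (Hv →L[ℂ] Hv)) (ζv : Hv)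
    (hv_cyc : DenseRange fun a : A => πv a ζv)
    (hv_rep : ∀ a : A, v a = ⟪ζv, πv a ζv⟫)
    (hirr : ∀ S : Hv →L[ℂ] Hv,
      (∀ (a : A) (ξ : Hv), S (πv a ξ) = πv a (S ξ)) →
      ∃ c : ℂ, S = c • (1 : Hv →L[ℂ] Hv))
    {Hw : Type*} [NormedAddCommGroup Hw] [InnerProductSpace ℂ Hw] [CompleteSpace Hw]
    (πw : A →⋆ₙₐ[ℂ] (Hw →L[ℂ] Hw)) (ζw : Hw)
    (hw_cyc : DenseRange fun a : A => πw a ζw)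
    (hw_rep : ∀ a : A, w a = ⟪ζw, πw a ζw⟫) :
    FunctionalAC w v ↔ ∃ α : ℝ, 0 ≤ α ∧ ∀ a : A, w a = (α : ℂ) * v a :=
  abs_continuous_iff_scalar_multiple_of_pure_general v w hv hw πv ζv hv_rep hirr πw ζw hw_rep
end

section
/- Let ν be a finite measure on a measurable space (T,Σ). For every f ∈ L²(ν) and every simple function φ one has |∫_T |f|·conj(φ) dν| ≤ sup{|∫_T f·conj(ψ) dν| : ψ a simple function with |ψ| ≤ |φ| pointwise}. -/
open MeasureTheory Filter Topology

/-!
Write `u` for the phase of `f`, so that `f * conj u = |f|`. Approximating `u` pointwise by simple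
functions `uₙ` with `|uₙ| ≤ 1`, the simple functions `ψₙ = uₙ φ` satisfy `|ψₙ| ≤ |φ|`, and dominated
convergence (with dominating function `|f| sup |φ|`, integrable because `L² ⊆ L¹` for a finite
measure) gives `∫ f conj ψₙ → ∫ |f| conj φ`. The set under the supremum is bounded by
`‖f‖₁ sup |φ|`, so each `|∫ f conj ψₙ|` lies below its supremum, and so does the limit.
-/

section

variable {T : Type*} [MeasurableSpace T] {μ : Measure T}

theorem exists_simpleFunc_tendsto_of_norm_le {E : Type*} [NormedAddCommGroup E]
    [MeasurableSpace E] [OpensMeasurableSpace E] [TopologicalSpace.SeparableSpace E]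
    {g : T → E} (hg : Measurable g) {r : ℝ} (hr : 0 ≤ r) (hgr : ∀ x, ‖g x‖ ≤ r) :
    ∃ u : ℕ → SimpleFunc T E, (∀ n x, ‖u n x‖ ≤ r) ∧
      ∀ x, Tendsto (fun n => u n x) atTop (𝓝 (g x)) := by
  have h0 : (0 : E) ∈ Metric.closedBall 0 r := Metric.mem_closedBall_self hr
  refine ⟨SimpleFunc.approxOn g hg (Metric.closedBall 0 r) 0 h0, fun n x => ?_, fun x => ?_⟩
  · simpa using SimpleFunc.approxOn_mem hg h0 n x
  · refine SimpleFunc.tendsto_approxOn hg h0 ?_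
    rw [Metric.isClosed_closedBall.closure_eq]
    simpa using hgr x

variable {𝕜 : Type*} [RCLike 𝕜]

theorem norm_integral_mul_conj_le {f ψ : T → 𝕜} (hf : Integrable f μ) {C : ℝ}
    (hψ : ∀ x, ‖ψ x‖ ≤ C) :
    ‖∫ x, f x * starRingEnd 𝕜 (ψ x) ∂μ‖ ≤ ∫ x, ‖f x‖ * C ∂μ :=
  norm_integral_le_of_norm_le (hf.norm.mul_const C) <| .of_forall fun x => by
    rw [norm_mul, RCLike.norm_conj]
    exact mul_le_mul_of_nonneg_left (hψ x) (norm_nonneg _)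

theorem tendsto_integral_mul_conj_of_tendsto {f g : T → 𝕜} {ψ : ℕ → T → 𝕜}
    (hf : Integrable f μ) (hψm : ∀ n, AEStronglyMeasurable (ψ n) μ) {C : ℝ}
    (hψC : ∀ n x, ‖ψ n x‖ ≤ C) (hψg : ∀ x, Tendsto (fun n => ψ n x) atTop (𝓝 (g x))) :
    Tendsto (fun n => ∫ x, f x * starRingEnd 𝕜 (ψ n x) ∂μ) atTop
      (𝓝 (∫ x, f x * starRingEnd 𝕜 (g x) ∂μ)) := by
  refine tendsto_integral_of_dominated_convergence (fun x => ‖f x‖ * C)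
    (fun n => hf.aestronglyMeasurable.mul (hψm n).star) (hf.norm.mul_const C)
    (fun n => .of_forall fun x => ?_) (.of_forall fun x => ?_)
  · rw [norm_mul, RCLike.norm_conj]
    exact mul_le_mul_of_nonneg_left (hψC n x) (norm_nonneg _)
  · exact ((RCLike.continuous_conj.tendsto _).comp (hψg x)).const_mul (f x)

theorem exists_tendsto_integral_mul_conj_mul {f u : T → 𝕜} (hf : Integrable f μ)
    (hu : Measurable u) (hu1 : ∀ x, ‖u x‖ ≤ 1) (φ : SimpleFunc T 𝕜) :
    ∃ ψ : ℕ → SimpleFunc T 𝕜, (∀ n x, ‖ψ n x‖ ≤ ‖φ x‖) ∧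
      Tendsto (fun n => ∫ x, f x * starRingEnd 𝕜 (ψ n x) ∂μ) atTop
        (𝓝 (∫ x, f x * starRingEnd 𝕜 (u x * φ x) ∂μ)) := by
  obtain ⟨v, hv1, hvu⟩ := exists_simpleFunc_tendsto_of_norm_le hu zero_le_one hu1
  obtain ⟨C, hC⟩ := φ.exists_forall_norm_le
  have hvφ : ∀ n x, ‖(v n * φ) x‖ ≤ ‖φ x‖ := fun n x => by
    simpa [norm_mul] using mul_le_mul_of_nonneg_right (hv1 n x) (norm_nonneg (φ x))
  refine ⟨fun n => v n * φ, hvφ, tendsto_integral_mul_conj_of_tendsto hf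
    (fun n => (v n * φ).aestronglyMeasurable) (fun n x => (hvφ n x).trans (hC x))
    fun x => ?_⟩
  simpa using (hvu x).mul_const (φ x)

end

theorem Complex.mul_conj_exp_arg_mul_I (z : ℂ) :
    z * starRingEnd ℂ (exp (arg z * I)) = ‖z‖ := by
  conv_lhs => rw [← norm_mul_exp_arg_mul_I z]
  rw [mul_assoc, ← exp_conj, ← exp_add]
  simp

/-- For a finite measure `ν`, every `f ∈ L²(ν)` and every simple function `φ` satisfy
`|∫ |f| conj φ dν| ≤ sup { |∫ f conj ψ dν| : ψ simple, |ψ| ≤ |φ| }`. -/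
theorem integral_abs_le_sup
    {T : Type*} [MeasurableSpace T] (ν : Measure T) [IsFiniteMeasure ν]
    (f : T → ℂ) (hf : MemLp f 2 ν) (φ : SimpleFunc T ℂ) :
    ‖∫ x, (‖f x‖ : ℂ) * (starRingEnd ℂ) (φ x) ∂ν‖ ≤
      sSup {r : ℝ | ∃ ψ : SimpleFunc T ℂ,
        (∀ x, ‖ψ x‖ ≤ ‖φ x‖) ∧ r = ‖∫ x, f x * (starRingEnd ℂ) (ψ x) ∂ν‖} := by
  have hfi : Integrable f ν := hf.integrable one_le_two
  -- the phase is taken from a measurable representative so that it has simple approximations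
  set u : T → ℂ := fun x =>
    Complex.exp (Complex.arg (hfi.aestronglyMeasurable.mk f x) * Complex.I)
  have hu : Measurable u := by
    have := hfi.aestronglyMeasurable.stronglyMeasurable_mk.measurable
    fun_prop
  have hu1 (x : T) : ‖u x‖ ≤ 1 := (Complex.norm_exp_ofReal_mul_I _).le
  have hfu : ∫ x, f x * starRingEnd ℂ (u x * φ x) ∂ν =
      ∫ x, (‖f x‖ : ℂ) * starRingEnd ℂ (φ x) ∂ν :=
    integral_congr_ae <| hfi.aestronglyMeasurable.ae_eq_mk.mono fun x hx => by
      dsimp only [u]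
      rw [map_mul, ← mul_assoc, hx, Complex.mul_conj_exp_arg_mul_I]
  obtain ⟨ψ, hψφ, hψ⟩ := exists_tendsto_integral_mul_conj_mul hfi hu hu1 φ
  obtain ⟨C, hC⟩ := φ.exists_forall_norm_le
  have hbdd : BddAbove {r : ℝ | ∃ ψ : SimpleFunc T ℂ,
      (∀ x, ‖ψ x‖ ≤ ‖φ x‖) ∧ r = ‖∫ x, f x * (starRingEnd ℂ) (ψ x) ∂ν‖} := by
    refine ⟨∫ x, ‖f x‖ * C ∂ν, ?_⟩
    rintro _ ⟨ψ, hψφ, rfl⟩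
    exact norm_integral_mul_conj_le hfi fun x => (hψφ x).trans (hC x)
  rw [← hfu]
  exact le_of_tendsto hψ.norm (.of_forall fun n => le_csSup hbdd ⟨ψ n, hψφ n, rfl⟩)
end
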